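/- For all positive integers n and d and for every linear order >_L on [n] × [d]_0, there exists a bijection Φ : 𝔖_n^d → 𝔖_n^d such that ldes(p) = lexc(Φ(p)) for all p ∈ 𝔖_n^d. In particular, the statistics ldes and lexc are equidistributed on 𝔖_n^d. -/

import Mathlib

open Finset

/-- The number of `L`-descents of a colored permutation `p = (π, c) ∈ 𝔖_n ≀ ℤ_d`,
with respect to a linear order `L` on `[n] × [d]₀` (modelled as `Fin n × Fin d`):
the number of positions `i ∈ [n-1]` with `(π_i, c_i) >_L (π_{i+1}, c_{i+1})`. -/
noncomputable def ldesL {n d : ℕ} (L : LinearOrder (Fin n × Fin d))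
    (p : Equiv.Perm (Fin n) × (Fin n → Fin d)) : ℕ :=
  Nat.card {i : Fin (n - 1) //
    L.lt (p.1 ⟨(i : ℕ) + 1, by have := i.isLt; omega⟩, p.2 ⟨(i : ℕ) + 1, by have := i.isLt; omega⟩)
         (p.1 ⟨(i : ℕ), by have := i.isLt; omega⟩, p.2 ⟨(i : ℕ), by have := i.isLt; omega⟩)}

/-- The number of `L`-excedances of a colored permutation `p = (π, c)`:
the number of positions `i ∈ [n]` with `(π_{π_i}, c_{π_i}) >_L (π_i, c_i)`. -/
noncomputable def lexcL {n d : ℕ} (L : LinearOrder (Fin n × Fin d))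
    (p : Equiv.Perm (Fin n) × (Fin n → Fin d)) : ℕ :=
  Nat.card {i : Fin n // L.lt (p.1 i, p.2 i) (p.1 (p.1 i), p.2 (p.1 i))}



open Finset Function

set_option linter.unusedSectionVars false

namespace FoataDev

variable {n : ℕ} [NeZero n] {α : Type*} [LinearOrder α] [Finite α]

/-- prefix maximum of the word `w` up to position `i`. -/
def Mw (w : Fin n ≃ α) (i : ℕ) : α :=
  (Finset.univ.filter (fun j : Fin n => (j : ℕ) ≤ i)).sup'
    ⟨⟨0, Nat.pos_of_ne_zero (NeZero.ne n)⟩, by simp⟩ w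

lemma le_Mw (w : Fin n ≃ α) {j : Fin n} {i : ℕ} (h : (j : ℕ) ≤ i) : w j ≤ Mw w i :=
  Finset.le_sup' _ (by simp [h])

lemma exists_Mw (w : Fin n ≃ α) (i : ℕ) : ∃ j : Fin n, (j : ℕ) ≤ i ∧ w j = Mw w i := by
  obtain ⟨j, hj, hje⟩ := Finset.exists_mem_eq_sup'
    (⟨⟨0, Nat.pos_of_ne_zero (NeZero.ne n)⟩, by simp⟩ :
      (Finset.univ.filter (fun j : Fin n => (j : ℕ) ≤ i)).Nonempty) w
  exact ⟨j, by simpa using hj, hje.symm⟩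

lemma Mw_mono (w : Fin n ≃ α) {i i' : ℕ} (h : i ≤ i') : Mw w i ≤ Mw w i' := by
  apply Finset.sup'_le
  intro j hj
  exact le_Mw w (le_trans (by simpa using hj) h)

lemma Mw_zero (w : Fin n ≃ α) : Mw w 0 = w ⟨0, Nat.pos_of_ne_zero (NeZero.ne n)⟩ := by
  apply le_antisymm
  · apply Finset.sup'_le
    intro j hj
    have hj0 : (j : ℕ) ≤ 0 := by simpa using hj
    have : j = ⟨0, Nat.pos_of_ne_zero (NeZero.ne n)⟩ := by
      apply Fin.ext; simp only [Fin.val_mk]; omega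
    rw [this]
  · exact le_Mw w (by simp)

lemma Mw_succ (w : Fin n ≃ α) {i : ℕ} (h : i + 1 < n) :
    Mw w (i + 1) = max (Mw w i) (w ⟨i + 1, h⟩) := by
  apply le_antisymm
  · apply Finset.sup'_le
    intro j hj
    have hj' : (j : ℕ) ≤ i + 1 := by simpa using hj
    rcases Nat.lt_or_ge (j : ℕ) (i + 1) with hc | hc
    · exact le_max_of_le_left (le_Mw w (by omega))
    · have : j = ⟨i + 1, h⟩ := by apply Fin.ext; simpa using le_antisymm hj' hc
      rw [this]; exact le_max_right _ _
  · exact max_le (Mw_mono w (Nat.le_succ i)) (le_Mw w le_rfl)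

lemma Mw_congr (w w' : Fin n ≃ α) (i : ℕ) (h : ∀ j : Fin n, (j : ℕ) ≤ i → w j = w' j) :
    Mw w i = Mw w' i :=
  Finset.sup'_congr _ rfl (fun j hj => h j (by simpa using hj))

/-- the point at which a record value occurs is itself a record position -/
lemma Mw_record (w : Fin n ≃ α) (i : ℕ) :
    ∃ j : Fin n, (j : ℕ) ≤ i ∧ w j = Mw w i ∧ Mw w (j : ℕ) = w j := by
  obtain ⟨j, hj, hje⟩ := exists_Mw w i
  refine ⟨j, hj, hje, le_antisymm ?_ (le_Mw w le_rfl)⟩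
  rw [hje]
  exact Mw_mono w hj

end FoataDev

namespace FoataDev

variable {n : ℕ} [NeZero n] {α : Type*} [LinearOrder α] [Finite α]

/-- the Foata successor function on positions. -/
def sw (w : Fin n ≃ α) (i : Fin n) : α :=
  if h : (i : ℕ) + 1 < n then
    (if w ⟨(i : ℕ) + 1, h⟩ < Mw w (i : ℕ) then w ⟨(i : ℕ) + 1, h⟩ else Mw w (i : ℕ))
  else Mw w (i : ℕ)

lemma sw_le (w : Fin n ≃ α) (i : Fin n) : sw w i ≤ Mw w (i : ℕ) := by
  unfold sw
  split_ifs with h1 h2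
  · exact le_of_lt h2
  · exact le_rfl
  · exact le_rfl

lemma Mw_ne_succ (w : Fin n ≃ α) {i : Fin n} (h : (i : ℕ) + 1 < n) :
    w ⟨(i : ℕ) + 1, h⟩ ≠ Mw w (i : ℕ) := by
  obtain ⟨j, hj, hje⟩ := exists_Mw w (i : ℕ)
  rw [← hje]
  intro hEq
  have := w.injective hEq
  have h2 : (i : ℕ) + 1 = (j : ℕ) := congrArg Fin.val this
  omega

lemma sw_cases (w : Fin n ≃ α) (i : Fin n) :
    (∃ h : (i : ℕ) + 1 < n, sw w i = w ⟨(i : ℕ) + 1, h⟩ ∧ w ⟨(i : ℕ) + 1, h⟩ < Mw w (i : ℕ)) ∨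
    (sw w i = Mw w (i : ℕ) ∧ ∀ h : (i : ℕ) + 1 < n, Mw w (i : ℕ) < w ⟨(i : ℕ) + 1, h⟩) := by
  unfold sw
  split_ifs with h1 h2
  · exact Or.inl ⟨h1, rfl, h2⟩
  · refine Or.inr ⟨rfl, fun h => ?_⟩
    exact lt_of_le_of_ne (not_lt.mp h2) (Ne.symm (Mw_ne_succ w h))
  · exact Or.inr ⟨rfl, fun h => absurd h h1⟩

lemma sw_lt_iff (w : Fin n ≃ α) (i : Fin n) :
    sw w i < w i ↔ ∃ h : (i : ℕ) + 1 < n, w ⟨(i : ℕ) + 1, h⟩ < w i := by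
  constructor
  · intro hlt
    rcases sw_cases w i with ⟨h, he, _⟩ | ⟨he, _⟩
    · exact ⟨h, by rwa [he] at hlt⟩
    · rw [he] at hlt
      exact absurd (le_Mw w (le_refl (i : ℕ))) (by simpa using not_le.mpr hlt)
  · rintro ⟨h, hlt⟩
    rcases sw_cases w i with ⟨h', he, _⟩ | ⟨he, hgt⟩
    · rwa [he]
    · exact absurd (lt_trans (hgt h) hlt) (by simp [le_Mw w (le_refl (i : ℕ))])

lemma sw_injective (w : Fin n ≃ α) : Function.Injective (sw w) := by
  intro i j hEq
  by_contra hne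
  -- wlog via cases on cases
  rcases sw_cases w i with ⟨hi, hie, hil⟩ | ⟨hie, hig⟩ <;>
    rcases sw_cases w j with ⟨hj, hje, hjl⟩ | ⟨hje, hjg⟩
  · -- both case 1
    rw [hie, hje] at hEq
    have := w.injective hEq
    have : (i : ℕ) = (j : ℕ) := by
      have := Fin.mk.injEq .. ▸ this
      omega
    exact hne (Fin.ext this)
  · -- i case 1, j case 2
    rw [hie, hje] at hEq
    obtain ⟨k, hk, hke, hkr⟩ := Mw_record w (j : ℕ)
    rw [← hke] at hEq
    have hik := w.injective hEq
    have h2 : Mw w (i : ℕ) ≤ Mw w ((i : ℕ) + 1) := Mw_mono w (Nat.le_succ _)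
    simp only [← hik, Fin.val_mk] at hkr
    rw [hkr] at h2
    exact absurd hil (not_lt.mpr h2)
  · -- i case 2, j case 1
    rw [hie, hje] at hEq
    obtain ⟨k, hk, hke, hkr⟩ := Mw_record w (i : ℕ)
    rw [← hke] at hEq
    have hik := w.injective hEq.symm
    have h2 : Mw w (j : ℕ) ≤ Mw w ((j : ℕ) + 1) := Mw_mono w (Nat.le_succ _)
    simp only [← hik, Fin.val_mk] at hkr
    rw [hkr] at h2
    exact absurd hjl (not_lt.mpr h2)
  · -- both case 2
    rw [hie, hje] at hEq
    have hvne : (i : ℕ) ≠ (j : ℕ) := fun h => hne (Fin.ext h)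
    -- wlog i < j
    have key : ∀ a b : Fin n, (a : ℕ) < (b : ℕ) →
        (∀ h : (a : ℕ) + 1 < n, Mw w (a : ℕ) < w ⟨(a : ℕ) + 1, h⟩) →
        Mw w (a : ℕ) < Mw w (b : ℕ) := by
      intro a b hab hgt
      have ha1 : (a : ℕ) + 1 < n := lt_of_le_of_lt hab b.isLt
      calc Mw w (a : ℕ) < w ⟨(a : ℕ) + 1, ha1⟩ := hgt ha1
        _ ≤ Mw w ((a : ℕ) + 1) := le_Mw w le_rfl
        _ ≤ Mw w (b : ℕ) := Mw_mono w (by omega)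
    rcases Nat.lt_or_ge (i : ℕ) (j : ℕ) with hc | hc
    · exact absurd hEq (ne_of_lt (key i j hc hig))
    · have hc' : (j : ℕ) < (i : ℕ) := by omega
      exact absurd hEq.symm (ne_of_lt (key j i hc' hjg))

/-- The inverse Foata transformation, as a permutation of the values. -/
noncomputable def Fo (w : Fin n ≃ α) : Equiv.Perm α :=
  Equiv.ofBijective (fun x => sw w (w.symm x))
    (Finite.injective_iff_bijective.mp
      (fun x y h => w.symm.injective (sw_injective w h)))

lemma Fo_apply (w : Fin n ≃ α) (i : Fin n) : Fo w (w i) = sw w i := by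
  simp [Fo]

end FoataDev

namespace FoataDev

variable {n : ℕ} [NeZero n] {α : Type*} [LinearOrder α] [Finite α]

/-- The "leader" (prefix maximum at the position) of a value. -/
noncomputable def Fv (w : Fin n ≃ α) (x : α) : α := Mw w ((w.symm x : Fin n) : ℕ)

lemma le_Fv (w : Fin n ≃ α) (x : α) : x ≤ Fv w x := by
  have := le_Mw w (le_refl ((w.symm x : Fin n) : ℕ))
  simpa [Fv] using this

lemma Fv_Fo (w : Fin n ≃ α) (x : α) : Fv w (Fo w x) = Fv w x := by
  set i := w.symm x with hi
  have hFo : Fo w x = sw w i := by simp [Fo]; rfl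
  rcases sw_cases w i with ⟨h, he, hl⟩ | ⟨he, _⟩
  · rw [hFo, he]
    unfold Fv
    rw [Equiv.symm_apply_apply]
    simp only [Fin.val_mk]
    rw [Mw_succ w h, max_eq_left (le_of_lt hl)]
  · rw [hFo, he]
    obtain ⟨j, hj, hje, hjr⟩ := Mw_record w (i : ℕ)
    unfold Fv
    rw [← hje, Equiv.symm_apply_apply, hjr, hje]

lemma Fv_Fo_pow (w : Fin n ≃ α) (x : α) (k : ℕ) : Fv w ((Fo w ^ k) x) = Fv w x := by
  induction k with
  | zero => simp
  | succ k ih =>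
    rw [pow_succ', Equiv.Perm.mul_apply, Fv_Fo, ih]

lemma Fv_sameCycle (w : Fin n ≃ α) {x y : α} (h : (Fo w).SameCycle x y) :
    Fv w y = Fv w x := by
  obtain ⟨k, _, hk⟩ := Equiv.Perm.SameCycle.exists_pow_eq' h
  rw [← hk, Fv_Fo_pow]

lemma exists_pow_Fv (w : Fin n ≃ α) :
    ∀ t i : ℕ, ∀ h : i < n, n - i ≤ t → ∃ k : ℕ, (Fo w ^ k) (w ⟨i, h⟩) = Mw w i := by
  intro t
  induction t with
  | zero => intro i h ht; omega
  | succ t ih =>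
    intro i h ht
    rcases sw_cases w ⟨i, h⟩ with ⟨h1, he, hl⟩ | ⟨he, _⟩
    · simp only [Fin.val_mk] at h1 he hl
      obtain ⟨k, hk⟩ := ih (i + 1) h1 (by omega)
      refine ⟨k + 1, ?_⟩
      have : (Fo w ^ (k + 1)) (w ⟨i, h⟩) = (Fo w ^ k) (Fo w (w ⟨i, h⟩)) := by
        rw [pow_succ, Equiv.Perm.mul_apply]
      rw [this, Fo_apply, he, hk, Mw_succ w h1, max_eq_left (le_of_lt hl)]
    · refine ⟨1, ?_⟩
      rw [pow_one, Fo_apply, he]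

lemma cycleMax_iff (w : Fin n ≃ α) (x : α) :
    (∀ y, (Fo w).SameCycle x y → y ≤ x) ↔ Fv w x = x := by
  constructor
  · intro h
    have hle : x ≤ Fv w x := le_Fv w x
    obtain ⟨k, hk⟩ := exists_pow_Fv w n ((w.symm x : Fin n) : ℕ) (w.symm x).isLt (by omega)
    have hx : w ⟨((w.symm x : Fin n) : ℕ), (w.symm x).isLt⟩ = x := by
      simp [Fin.eta]
    rw [hx] at hk
    have hsc : (Fo w).SameCycle x (Fv w x) := ⟨(k : ℤ), by rw [zpow_natCast, hk]; rfl⟩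
    exact le_antisymm (h _ hsc) hle
  · intro h y hy
    calc y ≤ Fv w y := le_Fv w y
      _ = Fv w x := Fv_sameCycle w hy
      _ = x := h

theorem Fo_injective : Function.Injective (Fo : (Fin n ≃ α) → Equiv.Perm α) := by
  intro w w' h
  have key : ∀ x, Fv w x = x ↔ Fv w' x = x := fun x =>
    (cycleMax_iff w x).symm.trans (by rw [h]; exact cycleMax_iff w' x)
  have hz : (0 : ℕ) < n := Nat.pos_of_ne_zero (NeZero.ne n)
  suffices H : ∀ m : ℕ, ∀ hm : m < n, w ⟨m, hm⟩ = w' ⟨m, hm⟩ by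
    apply Equiv.ext
    intro i
    have := H (i : ℕ) i.isLt
    simpa [Fin.eta] using this
  intro m
  induction m using Nat.strong_induction_on with
  | _ m ih =>
    intro hm
    -- helper facts, for any word v
    have hfix : ∀ v : Fin n ≃ α, Fv v (v ⟨0, hz⟩) = v ⟨0, hz⟩ := by
      intro v
      unfold Fv
      rw [Equiv.symm_apply_apply]
      simpa using (Mw_zero v)
    have hlb0 : ∀ (v : Fin n ≃ α) (x : α), Fv v x = x → v ⟨0, hz⟩ ≤ x := by
      intro v x hx
      calc v ⟨0, hz⟩ = Mw v 0 := (Mw_zero v).symm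
        _ ≤ Mw v ((v.symm x : Fin n) : ℕ) := Mw_mono v (Nat.zero_le _)
        _ = x := hx
    rcases Nat.eq_zero_or_pos m with hm0 | hmpos
    · subst hm0
      apply le_antisymm
      · exact hlb0 w _ ((key _).mpr (hfix w'))
      · exact hlb0 w' _ ((key _).mp (hfix w))
    · obtain ⟨j, rfl⟩ : ∃ j, m = j + 1 := ⟨m - 1, by omega⟩
      have hj : j < n := by omega
      have hpre : ∀ t : Fin n, (t : ℕ) ≤ j → w t = w' t := by
        intro t ht
        have := ih (t : ℕ) (by omega) t.isLt
        simpa [Fin.eta] using this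
      have hMw : Mw w j = Mw w' j := Mw_congr w w' j hpre
      have hxx : w' ⟨j, hj⟩ = w ⟨j, hj⟩ := (hpre ⟨j, hj⟩ (by simp)).symm
      -- the two sw values agree
      have hsw : sw w ⟨j, hj⟩ = sw w' ⟨j, hj⟩ := by
        have h1 : Fo w (w ⟨j, hj⟩) = sw w ⟨j, hj⟩ := Fo_apply w _
        have h2 : Fo w' (w' ⟨j, hj⟩) = sw w' ⟨j, hj⟩ := Fo_apply w' _
        rw [← h1, ← h2, hxx, h]
      rcases sw_cases w ⟨j, hj⟩ with ⟨h1, he, hl⟩ | ⟨he, hg⟩ <;>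
        rcases sw_cases w' ⟨j, hj⟩ with ⟨h1', he', hl'⟩ | ⟨he', hg'⟩
      · -- both case 1 : done
        simp only [Fin.val_mk] at he he' hl hl'
        have : w ⟨j + 1, hm⟩ = w' ⟨j + 1, hm⟩ := by
          rw [← he, ← he', hsw]
        exact this
      · -- w case 1, w' case 2 : contradiction
        exfalso
        simp only [Fin.val_mk] at he he' hl
        rw [hsw, he'] at he
        rw [← hMw] at he
        rw [he] at hl
        exact lt_irrefl _ hl
      · exfalso
        simp only [Fin.val_mk] at he he' hl'
        rw [← hsw, he] at he'
        rw [← hMw] at hl'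
        rw [← he'] at hl'
        exact lt_irrefl _ hl'
      · -- both case 2
        simp only [Fin.val_mk] at he he' hg hg'
        have hgm : Mw w j < w ⟨j + 1, hm⟩ := hg hm
        have hgm' : Mw w' j < w' ⟨j + 1, hm⟩ := hg' hm
        -- both w ⟨j+1⟩ and w' ⟨j+1⟩ are the least fixed point of Fv above Mw w j
        have hcm : ∀ (v : Fin n ≃ α), Mw v j < v ⟨j + 1, hm⟩ → Fv v (v ⟨j + 1, hm⟩) = v ⟨j + 1, hm⟩ := by
          intro v hv
          unfold Fv
          rw [Equiv.symm_apply_apply]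
          simp only [Fin.val_mk]
          rw [Mw_succ v hm, max_eq_right (le_of_lt hv)]
        have hlb : ∀ (v : Fin n ≃ α) (y : α), Mw v j < v ⟨j + 1, hm⟩ →
            Fv v y = y → Mw v j < y → v ⟨j + 1, hm⟩ ≤ y := by
          intro v y hv hy hgty
          by_cases hc : ((v.symm y : Fin n) : ℕ) ≤ j
          · exfalso
            have : y ≤ Mw v j := by
              have := le_Mw v hc
              simpa using this
            exact absurd hgty (not_lt.mpr this)
          · have hge : j + 1 ≤ ((v.symm y : Fin n) : ℕ) := by omega
            calc v ⟨j + 1, hm⟩ = Fv v (v ⟨j + 1, hm⟩) := (hcm v hv).symm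
              _ = Mw v (j + 1) := by
                  unfold Fv; rw [Equiv.symm_apply_apply]
              _ ≤ Mw v ((v.symm y : Fin n) : ℕ) := Mw_mono v hge
              _ = y := hy
        apply le_antisymm
        · refine hlb w _ hgm ((key _).mpr (hcm w' hgm')) ?_
          rw [hMw]; exact hgm'
        · refine hlb w' _ hgm' ((key _).mp (hcm w hgm)) ?_
          rw [← hMw]; exact hgm

end FoataDev

namespace FoataDev

variable {n : ℕ} [NeZero n] {α : Type*} [LinearOrder α] [Finite α]

/-- The inverse Foata transformation as a bijection between words and permutations. -/
noncomputable def FoE (e0 : Fin n ≃ α) : (Fin n ≃ α) ≃ Equiv.Perm α :=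
  Equiv.ofBijective Fo
    ((Nat.bijective_iff_injective_and_card Fo).mpr
      ⟨Fo_injective, Nat.card_congr (Equiv.equivCongr e0 (Equiv.refl α))⟩)

lemma FoE_apply (e0 w : Fin n ≃ α) : FoE e0 w = Fo w := rfl

section Colored

variable {d : ℕ}

/-- transversals: graphs of color functions. `L` is a phantom parameter used
to key the linear order instance. -/
def Tr (_L : LinearOrder (Fin n × Fin d)) (γ : Fin n → Fin d) : Type :=
  {v : Fin n × Fin d // v.2 = γ v.1}

variable (L : LinearOrder (Fin n × Fin d)) (γ : Fin n → Fin d)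

instance : LinearOrder (Tr L γ) := @Subtype.instLinearOrder _ L _

instance : Finite (Tr L γ) := by unfold Tr; infer_instance

lemma Tr_lt_iff (a b : Tr L γ) : a < b ↔ L.lt a.1 b.1 := Iff.rfl

/-- projection to the first coordinate is a bijection on a transversal. -/
def fstE : Tr L γ ≃ Fin n where
  toFun v := v.1.1
  invFun i := ⟨(i, γ i), rfl⟩
  left_inv v := by
    obtain ⟨⟨a, b⟩, hv⟩ := v
    simp only at hv
    subst hv
    rfl
  right_inv i := rfl

/-- the word of a colored permutation. -/
def toWordAt (p : Equiv.Perm (Fin n) × (Fin n → Fin d))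
    (hp : ∀ i, p.2 i = γ (p.1 i)) : Fin n ≃ Tr L γ where
  toFun i := ⟨(p.1 i, p.2 i), hp i⟩
  invFun v := p.1.symm v.1.1
  left_inv i := by simp
  right_inv v := by
    obtain ⟨⟨a, b⟩, hv⟩ := v
    simp only at hv
    subst hv
    simp [hp]
    rfl

/-- reconstructing a colored permutation from a word. -/
def toPair (u : Fin n ≃ Tr L γ) : Equiv.Perm (Fin n) × (Fin n → Fin d) :=
  (u.trans (fstE L γ), fun i => (u i).1.2)

lemma toPair_gamma (u : Fin n ≃ Tr L γ) :
    ∀ i, (toPair L γ u).2 i = γ ((toPair L γ u).1 i) := by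
  intro i
  simp only [toPair, Equiv.trans_apply]
  exact (u i).2

lemma toPair_gamma' (u : Fin n ≃ Tr L γ) :
    (toPair L γ u).2 ∘ (toPair L γ u).1.symm = γ := by
  funext x
  simp only [Function.comp_apply]
  rw [toPair_gamma L γ u]
  congr 1
  exact (toPair L γ u).1.apply_symm_apply x

lemma toPair_injective : Function.Injective (toPair L γ) := by
  intro u u' h
  have h1 := congrArg Prod.fst h
  have h2 := congrArg Prod.snd h
  apply Equiv.ext
  intro i
  apply Subtype.ext
  apply Prod.ext
  · have := congrArg (fun e : Equiv.Perm (Fin n) => e i) h1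
    simp [toPair, fstE] at this; rw [this]
  · have := congrArg (fun f : Fin n → Fin d => f i) h2
    simpa [toPair] using this

lemma toWordAt_injective (p p' : Equiv.Perm (Fin n) × (Fin n → Fin d))
    (hp : ∀ i, p.2 i = γ (p.1 i)) (hp' : ∀ i, p'.2 i = γ (p'.1 i))
    (h : toWordAt L γ p hp = toWordAt L γ p' hp') : p = p' := by
  have hpt : ∀ i, p.1 i = p'.1 i ∧ p.2 i = p'.2 i := by
    intro i
    have := congrArg (fun e : Fin n ≃ Tr L γ => (e i).1) h
    simp only [toWordAt, Equiv.coe_fn_mk] at this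
    exact ⟨congrArg Prod.fst this, congrArg Prod.snd this⟩
  obtain ⟨π, c⟩ := p
  obtain ⟨π', c'⟩ := p'
  simp only [Prod.mk.injEq]
  constructor
  · exact Equiv.ext fun i => (hpt i).1
  · exact funext fun i => (hpt i).2

/-- the fiberwise bijection on words. -/
noncomputable def K : (Fin n ≃ Tr L γ) ≃ (Fin n ≃ Tr L γ) :=
  (FoE (fstE L γ).symm).trans
    ((⟨Equiv.symm, Equiv.symm, fun g => g.symm_symm, fun g => g.symm_symm⟩ :
        Equiv.Perm (Tr L γ) ≃ Equiv.Perm (Tr L γ)).trans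
      (Equiv.equivCongr (fstE L γ) (Equiv.refl (Tr L γ))))

lemma K_apply (u : Fin n ≃ Tr L γ) (i : Fin n) :
    K L γ u i = (Fo u).symm ((fstE L γ).symm i) := rfl

end Colored

end FoataDev

namespace FoataDev

variable {n d : ℕ} [NeZero n]

/-- the fiberwise map assembled over all color functions. -/
noncomputable def psi (L : LinearOrder (Fin n × Fin d)) (γ : Fin n → Fin d)
    (p : Equiv.Perm (Fin n) × (Fin n → Fin d)) (hp : ∀ i, p.2 i = γ (p.1 i)) :
    Equiv.Perm (Fin n) × (Fin n → Fin d) :=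
  toPair L γ (K L γ (toWordAt L γ p hp))

lemma psi_congr (L : LinearOrder (Fin n × Fin d)) (γ γ' : Fin n → Fin d)
    (p : Equiv.Perm (Fin n) × (Fin n → Fin d)) (hp : ∀ i, p.2 i = γ (p.1 i))
    (h : γ = γ') (hp' : ∀ i, p.2 i = γ' (p.1 i)) :
    psi L γ p hp = psi L γ' p hp' := by
  subst h
  rfl

/-- the global Foata-style map on colored permutations. -/
noncomputable def phi (L : LinearOrder (Fin n × Fin d))
    (p : Equiv.Perm (Fin n) × (Fin n → Fin d)) :
    Equiv.Perm (Fin n) × (Fin n → Fin d) :=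
  psi L (p.2 ∘ p.1.symm) p (fun i => by simp)

lemma phi_gamma (L : LinearOrder (Fin n × Fin d))
    (p : Equiv.Perm (Fin n) × (Fin n → Fin d)) :
    (phi L p).2 ∘ (phi L p).1.symm = p.2 ∘ p.1.symm :=
  toPair_gamma' L _ _

lemma phi_injective (L : LinearOrder (Fin n × Fin d)) :
    Function.Injective (phi L) := by
  intro p p' h
  have hγ : p.2 ∘ p.1.symm = p'.2 ∘ p'.1.symm := by
    rw [← phi_gamma L p, ← phi_gamma L p', h]
  have hp'' : ∀ i, p'.2 i = (p.2 ∘ p.1.symm) (p'.1 i) := by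
    rw [hγ]; intro i; simp
  have hrw : phi L p' = psi L (p.2 ∘ p.1.symm) p' hp'' :=
    psi_congr L _ _ p' _ hγ.symm hp''
  rw [hrw] at h
  have h1 := toPair_injective L _ h
  have h2 := (K L _).injective h1
  exact toWordAt_injective L _ p p' _ hp'' h2

/-- the global Foata-style bijection on colored permutations. -/
noncomputable def Phi (L : LinearOrder (Fin n × Fin d)) :
    (Equiv.Perm (Fin n) × (Fin n → Fin d)) ≃ (Equiv.Perm (Fin n) × (Fin n → Fin d)) :=
  Equiv.ofBijective (phi L) (Finite.injective_iff_bijective.mp (phi_injective L))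

end FoataDev

namespace FoataDev

variable {n d : ℕ} [NeZero n]

lemma stat_key (L : LinearOrder (Fin n × Fin d)) (γ : Fin n → Fin d)
    (p : Equiv.Perm (Fin n) × (Fin n → Fin d)) (hp : ∀ i, p.2 i = γ (p.1 i)) :
    ldesL L p = lexcL L (psi L γ p hp) := by
  classical
  set u : Fin n ≃ Tr L γ := toWordAt L γ p hp with hu
  set v : Fin n ≃ Tr L γ := K L γ u with hv
  have hq : psi L γ p hp = toPair L γ v := rfl
  rw [hq]
  unfold ldesL lexcL
  apply Nat.card_congr
  have e1 : {i : Fin (n - 1) //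
      L.lt (p.1 ⟨(i : ℕ) + 1, by have := i.isLt; omega⟩, p.2 ⟨(i : ℕ) + 1, by have := i.isLt; omega⟩)
           (p.1 ⟨(i : ℕ), by have := i.isLt; omega⟩, p.2 ⟨(i : ℕ), by have := i.isLt; omega⟩)} ≃
      {i : Fin n // sw u i < u i} := by
    refine ⟨fun x => ⟨⟨(x.1 : ℕ), by have := x.1.isLt; omega⟩, ?_⟩,
            fun x => ⟨⟨(x.1 : ℕ), ?_⟩, ?_⟩, ?_, ?_⟩
    · apply (sw_lt_iff u ⟨(x.1 : ℕ), by have := x.1.isLt; omega⟩).mpr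
      refine ⟨by have := x.1.isLt; simp only [Fin.val_mk]; omega, ?_⟩
      exact x.2
    · have := (sw_lt_iff u x.1).mp x.2
      obtain ⟨h1, -⟩ := this
      omega
    · obtain ⟨h1, h2⟩ := (sw_lt_iff u x.1).mp x.2
      exact h2
    · intro x
      apply Subtype.ext
      apply Fin.ext
      rfl
    · intro x
      apply Subtype.ext
      apply Fin.ext
      rfl
  have e2 : {i : Fin n // sw u i < u i} ≃ {y : Tr L γ // Fo u y < y} :=
    Equiv.subtypeEquiv u (fun i => by rw [Fo_apply])
  have e3 : {y : Tr L γ // Fo u y < y} ≃ {x : Tr L γ // x < (Fo u).symm x} :=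
    Equiv.subtypeEquiv (Fo u) (fun y => by simp)
  have e4 : {i : Fin n //
      L.lt ((toPair L γ v).1 i, (toPair L γ v).2 i)
           ((toPair L γ v).1 ((toPair L γ v).1 i), (toPair L γ v).2 ((toPair L γ v).1 i))} ≃
      {x : Tr L γ // x < (Fo u).symm x} := by
    apply Equiv.subtypeEquiv v
    intro i
    have hvv : v ((fstE L γ) (v i)) = (Fo u).symm (v i) := by
      rw [hv, K_apply, Equiv.symm_apply_apply]
    simp only [toPair, Equiv.trans_apply]
    rw [hvv]
    exact Iff.rfl
  exact e1.trans (e2.trans (e3.trans e4.symm))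

end FoataDev

/-- For any linear order `L` on `[n] × [d]₀`, there is a bijection `Φ` of the colored
permutation group `𝔖_n^d` with `ldes(p) = lexc(Φ(p))` for all `p`; in particular
`ldes` and `lexc` are equidistributed on `𝔖_n^d`. -/
theorem stmt2 (n d : ℕ) (hn : 0 < n) (hd : 0 < d) (L : LinearOrder (Fin n × Fin d)) :
    ∃ Φ : (Equiv.Perm (Fin n) × (Fin n → Fin d)) ≃ (Equiv.Perm (Fin n) × (Fin n → Fin d)),
      ∀ p, ldesL L p = lexcL L (Φ p) := by
  haveI : NeZero n := ⟨hn.ne'⟩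
  refine ⟨FoataDev.Phi L, fun p => ?_⟩
  have h1 : FoataDev.Phi L p = FoataDev.phi L p := rfl
  rw [h1]
  exact FoataDev.stat_key L (p.2 ∘ p.1.symm) p (fun i => by simp)
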